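/- If k is odd, then for all integers q and r: x_{k,q,r} = x_{k−1,q−1,r−1}. -/

import Mathlib

/-- A quandle as in the paper: a set with operations `▷` and `▷⁻¹` satisfying
axioms A1, A2, A3. -/
class PaperQuandle (Q : Type*) where
  rhd : Q → Q → Q
  rhdInv : Q → Q → Q
  fix : ∀ x : Q, rhd x x = x
  inv_rhd : ∀ x y : Q, rhdInv (rhd x y) y = x
  rhd_inv : ∀ x y : Q, rhd (rhdInv x y) y = x
  self_distrib : ∀ x y z : Q, rhd (rhd x y) z = rhd (rhd x z) (rhd y z)

infixl:65 " ▷ " => PaperQuandle.rhd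
infixl:65 " ▷⁻¹ " => PaperQuandle.rhdInv

/-- The point symmetry at `u`, as a permutation of `Q`: `x ↦ x ▷ u`,
with inverse `x ↦ x ▷⁻¹ u`. -/
def ptSym {Q : Type*} [PaperQuandle Q] (u : Q) : Equiv.Perm Q where
  toFun x := x ▷ u
  invFun x := x ▷⁻¹ u
  left_inv x := PaperQuandle.inv_rhd x u
  right_inv x := PaperQuandle.rhd_inv x u

/-- The element `x_{p,q,r} = a^{(ba)^t c^q d^r}` if `p = 2t`, and
`a^{(ba)^t b c^q d^r}` if `p = 2t+1`.  Here the word `ba` (apply `b`, then `a`)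
is the permutation `ptSym a * ptSym b`. -/
def X {Q : Type*} [PaperQuandle Q] (a b c d : Q) (p q r : ℤ) : Q :=
  if Even p then
    (ptSym d ^ r) ((ptSym c ^ q) (((ptSym a * ptSym b) ^ (p / 2)) a))
  else
    (ptSym d ^ r) ((ptSym c ^ q) ((((ptSym a * ptSym b) ^ ((p - 1) / 2)) a) ▷ b))

/-!
All relations only involve point symmetries, so they can be read in the permutation group of `Q`.
Write `A, B, …` for the point symmetries of `a, b, …` and `P = A * B`. The relations `dea` and
`bdf` exhibit `D` as a product of two involutions in two ways (`D = E A = F B`), so `A` and `B`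
both invert `D` and hence `P` commutes with `D`; the relation `c(ab)^k ae` then gives
`D C = P ^ k`. For `k = 2t + 1` the dihedral relation `B P ^ t = P ^ (-t) B` turns
`P ^ k B P ^ t` into `P ^ t A`, and `A` fixes `a`.
-/

section Group

variable {G : Type*} [Group G]

theorem semiconjBy_mul_inv_of_mul_self_eq_one {x y : G} (hx : x * x = 1) (hy : y * y = 1) :
    SemiconjBy x (y * x) (y * x)⁻¹ := by
  rw [SemiconjBy, mul_inv_rev, inv_eq_of_mul_eq_one_right hx, inv_eq_of_mul_eq_one_right hy,
    mul_assoc]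

theorem commute_mul_of_semiconjBy_inv {x y z : G} (hx : SemiconjBy x z z⁻¹)
    (hy : SemiconjBy y z z⁻¹) : Commute (x * y) z := by
  have hx' : SemiconjBy x z⁻¹ z := by simpa only [inv_inv] using hx.inv_right
  exact hx'.mul_left hy

theorem zpow_two_mul_add_one_mul_mul_zpow {x y : G} (hx : x * x = 1) (hy : y * y = 1) (t : ℤ) :
    (x * y) ^ (2 * t + 1) * y * (x * y) ^ t = (x * y) ^ t * x := by
  have hflip : y * (x * y) ^ t = (x * y) ^ (-t) * y := by
    rw [zpow_neg, ← inv_zpow]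
    exact ((semiconjBy_mul_inv_of_mul_self_eq_one hy hx).zpow_right t).eq
  calc (x * y) ^ (2 * t + 1) * y * (x * y) ^ t
      = (x * y) ^ (2 * t + 1) * (x * y) ^ (-t) * y := by rw [mul_assoc, hflip, ← mul_assoc]
    _ = (x * y) ^ t * x * (y * y) := by
        rw [← zpow_add, show 2 * t + 1 + -t = t + 1 by ring, zpow_add_one]
        group
    _ = (x * y) ^ t * x := by rw [hy, mul_one]

theorem Commute.zpow_mul_zpow_eq {x y : G} (h : Commute x y) (r q : ℤ) :
    x ^ r * y ^ q = x ^ (r - 1) * y ^ (q - 1) * (x * y) := by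
  conv_lhs => rw [← sub_add_cancel r 1, ← sub_add_cancel q 1, zpow_add_one, zpow_add_one]
  rw [mul_assoc, ← mul_assoc x, (h.zpow_right (q - 1)).eq]
  simp only [mul_assoc]

theorem eq_mul_of_mul_mul_eq_one {x y z : G} (hx : x * x = 1) (hy : y * y = 1)
    (h : x * y * z = 1) : z = y * x :=
  calc z = y * (x * x) * y * z := by rw [hx, mul_one, hy, one_mul]
    _ = y * x * (x * y * z) := by group
    _ = y * x := by rw [h, mul_one]

theorem commute_mul_of_relations {a b d e f : G} (ha : a * a = 1) (hb : b * b = 1)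
    (he : e * e = 1) (hf : f * f = 1) (hdea : a * e * d = 1) (hbdf : f * d * b = 1) :
    Commute (a * b) d := by
  have hd_ea : d = e * a := eq_mul_of_mul_mul_eq_one ha he hdea
  have hd_fb : d = f * b := by
    have hdbf : b * f * d = 1 := by
      rw [show b * f * d = b * (f * d * b) * b⁻¹ by group, hbdf, mul_one, mul_inv_cancel]
    exact eq_mul_of_mul_mul_eq_one hb hf hdbf
  apply commute_mul_of_semiconjBy_inv
  · rw [hd_ea]; exact semiconjBy_mul_inv_of_mul_self_eq_one ha he
  · rw [hd_fb]; exact semiconjBy_mul_inv_of_mul_self_eq_one hb hf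

theorem eq_zpow_mul_inv_of_relations {a b c d e : G} (k : ℤ) (ha : a * a = 1) (hb : b * b = 1)
    (he : e * e = 1) (hdea : a * e * d = 1) (hcke : e * a * (b * a) ^ k * c = 1) :
    c = (a * b) ^ k * d⁻¹ := by
  rw [eq_inv_of_mul_eq_one_right hcke, eq_mul_of_mul_mul_eq_one ha he hdea]
  simp only [mul_inv_rev, ← inv_zpow, inv_eq_of_mul_eq_one_right ha,
    inv_eq_of_mul_eq_one_right hb, inv_eq_of_mul_eq_one_right he]

end Group

section Quandle

variable {Q : Type*} [PaperQuandle Q]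

theorem ptSym_apply (u x : Q) : ptSym u x = x ▷ u := rfl

theorem ptSym_mul_self_eq_one {u : Q} (h : ∀ x : Q, x ▷ u ▷ u = x) : ptSym u * ptSym u = 1 :=
  Equiv.ext h

theorem X_two_mul (a b c d : Q) (t q r : ℤ) :
    X a b c d (2 * t) q r = (ptSym d ^ r * ptSym c ^ q * (ptSym a * ptSym b) ^ t) a := by
  simp [X]

theorem X_two_mul_add_one (a b c d : Q) (t q r : ℤ) :
    X a b c d (2 * t + 1) q r =
      (ptSym d ^ r * ptSym c ^ q * ptSym b * (ptSym a * ptSym b) ^ t) a := by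
  simp [X, ptSym_apply]

end Quandle

theorem stmt_11_general
    {Q : Type*} [PaperQuandle Q] (k : ℤ) (a b c d e f : Q)
    (rel_a : ∀ x : Q, x ▷ a ▷ a = x)
    (rel_b : ∀ x : Q, x ▷ b ▷ b = x)
    (rel_e : ∀ x : Q, x ▷ e ▷ e = x)
    (rel_f : ∀ x : Q, x ▷ f ▷ f = x)
    (rel_dea : ∀ x : Q, x ▷ d ▷ e ▷ a = x)
    (rel_bdf : ∀ x : Q, x ▷ b ▷ d ▷ f = x)
    (rel_cke : ∀ x : Q, (((ptSym b * ptSym a) ^ k) (x ▷ c)) ▷ a ▷ e = x)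
    (hko : Odd k) :
    ∀ q r : ℤ, X a b c d k q r = X a b c d (k - 1) (q - 1) (r - 1) := by
  intro q r
  obtain ⟨t, rfl⟩ := hko
  set A := ptSym a
  set B := ptSym b
  set C := ptSym c
  set D := ptSym d
  set P := A * B
  have hA : A * A = 1 := ptSym_mul_self_eq_one rel_a
  have hB : B * B = 1 := ptSym_mul_self_eq_one rel_b
  have hE := ptSym_mul_self_eq_one rel_e
  have hPD : Commute P D :=
    commute_mul_of_relations hA hB hE (ptSym_mul_self_eq_one rel_f) (Equiv.ext rel_dea)
      (Equiv.ext rel_bdf)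
  have hC : C = P ^ (2 * t + 1) * D⁻¹ :=
    eq_zpow_mul_inv_of_relations _ hA hB hE (Equiv.ext rel_dea) (Equiv.ext rel_cke)
  have hDC : D * C = P ^ (2 * t + 1) := by
    rw [hC, (hPD.zpow_left _).symm.mul_inv_cancel_assoc]
  have hCD : Commute D C := by
    rw [hC]
    exact (hPD.zpow_left _).symm.mul_right (Commute.refl D).inv_right
  rw [add_sub_cancel_right, X_two_mul_add_one, X_two_mul]
  calc (D ^ r * C ^ q * B * P ^ t) a
      = (D ^ (r - 1) * C ^ (q - 1) * (D * C * B * P ^ t)) a := by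
        rw [hCD.zpow_mul_zpow_eq]
        simp only [mul_assoc]
    _ = (D ^ (r - 1) * C ^ (q - 1) * (P ^ t * A)) a := by
        rw [hDC, zpow_two_mul_add_one_mul_mul_zpow hA hB]
    _ = (D ^ (r - 1) * C ^ (q - 1) * P ^ t) a := by
        rw [← mul_assoc, Equiv.Perm.mul_apply, ptSym_apply, PaperQuandle.fix]

theorem stmt_11
    {Q : Type*} [PaperQuandle Q] (k : ℤ) (m n : ℕ) (a b c d e f : Q)
    (hk : 1 ≤ k) (hm : 0 < m) (hn : 0 < n)
    (rel_a : ∀ x : Q, x ▷ a ▷ a = x)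
    (rel_b : ∀ x : Q, x ▷ b ▷ b = x)
    (rel_e : ∀ x : Q, x ▷ e ▷ e = x)
    (rel_f : ∀ x : Q, x ▷ f ▷ f = x)
    (rel_c : ∀ x : Q, (ptSym c ^ m) x = x)
    (rel_d : ∀ x : Q, (ptSym d ^ n) x = x)
    (rel_dea : ∀ x : Q, x ▷ d ▷ e ▷ a = x)
    (rel_bdf : ∀ x : Q, x ▷ b ▷ d ▷ f = x)
    (rel_cke : ∀ x : Q, (((ptSym b * ptSym a) ^ k) (x ▷ c)) ▷ a ▷ e = x)
    (rel_fca : ∀ x : Q, (((ptSym b * ptSym a) ^ (k - 1)) (x ▷ f ▷ c)) ▷ a = x)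
    (hko : Odd k) :
    ∀ q r : ℤ, X a b c d k q r = X a b c d (k - 1) (q - 1) (r - 1) :=
  stmt_11_general k a b c d e f rel_a rel_b rel_e rel_f rel_dea rel_bdf rel_cke hko
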